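/- arXiv:2010.07908 — 4 statements merged into one kernel-verified Lean document; each statement's English description precedes it below -/
import Mathlib

section
/- Let H and D be complex Hilbert spaces, U a unitary operator on H, B : D → H a linear isometry, Γ a bounded operator on D with ‖Γ‖ ≤ 1, and T := U + B(Γ − I)B*U. Then ‖T‖ ≤ 1, i.e. T is a contraction. -/
open ContinuousLinearMap

local notation "⟪" x ", " y "⟫" => @inner ℂ _ _ x y

/-- If `U` is unitary, `B` is an isometry and `Γ` is a contraction, then
`T = U + B (Γ - I) B* U` is a contraction. -/
theorem perturbed_is_contraction
    {H D : Type*} [NormedAddCommGroup H] [InnerProductSpace ℂ H] [CompleteSpace H]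
    [NormedAddCommGroup D] [InnerProductSpace ℂ D] [CompleteSpace D]
    (U : H →L[ℂ] H) (hU : U ∈ unitary (H →L[ℂ] H))
    (B : D →L[ℂ] H) (hB : ∀ x : D, ‖B x‖ = ‖x‖)
    (Γ : D →L[ℂ] D) (hΓ : ‖Γ‖ ≤ 1)
    (T : H →L[ℂ] H) (hT : T = U + B ∘L (Γ - 1) ∘L adjoint B ∘L U) :
    ‖T‖ ≤ 1 := by
  set Bi : D →ₗᵢ[ℂ] H := ⟨B.toLinearMap, hB⟩ with hBi
  have hBinner : ∀ x y : D, ⟪B x, B y⟫ = ⟪x, y⟫ := fun x y => Bi.inner_map_map x y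
  have hBB : ∀ y : H, ∀ q : D, ⟪y - B (adjoint B y), B q⟫ = 0 := by
    intro y q
    rw [inner_sub_left, hBinner, adjoint_inner_left]
    ring
  have hUnorm : ∀ x : H, ‖U x‖ = ‖x‖ := by
    intro x
    have h1 : (star U) * U = 1 := hU.1
    have h2 : adjoint U (U x) = x := by
      have := congrArg (fun A : H →L[ℂ] H => A x) h1
      simpa [ContinuousLinearMap.star_eq_adjoint, mul_apply] using this
    have h3 : ⟪U x, U x⟫ = ⟪x, x⟫ := by
      rw [← adjoint_inner_left, h2]
    rw [@norm_eq_sqrt_re_inner ℂ, @norm_eq_sqrt_re_inner ℂ, h3]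
  refine T.opNorm_le_bound zero_le_one (fun x => ?_)
  rw [one_mul]
  set y := U x with hy
  set p := adjoint B y with hp
  have hTx : T x = (y - B p) + B (Γ p) := by
    simp [hT, hy, hp, map_sub]
    abel
  have hsq : ‖T x‖ * ‖T x‖ ≤ ‖x‖ * ‖x‖ := by
    rw [hTx, norm_add_sq_eq_norm_sq_add_norm_sq_of_inner_eq_zero _ _ (hBB y (Γ p))]
    have h1 : ‖B (Γ p)‖ ≤ ‖p‖ := by
      rw [hB]
      calc ‖Γ p‖ ≤ ‖Γ‖ * ‖p‖ := Γ.le_opNorm p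
        _ ≤ 1 * ‖p‖ := by gcongr
        _ = ‖p‖ := one_mul _
    have h2 : ‖y - B p‖ * ‖y - B p‖ + ‖p‖ * ‖p‖ = ‖x‖ * ‖x‖ := by
      have := norm_add_sq_eq_norm_sq_add_norm_sq_of_inner_eq_zero _ _ (hBB y p)
      rw [sub_add_cancel] at this
      rw [← hB p, ← this, hy, hUnorm]
    nlinarith [norm_nonneg (B (Γ p)), norm_nonneg p]
  nlinarith [norm_nonneg (T x), norm_nonneg x]
end

section
/- Let H be a complex Hilbert space and let K be a bounded operator on H such that ‖I + K‖ ≤ 1. Then K maps the orthogonal complement of its kernel into itself: for every x ∈ (ker K)^⊥ one has Kx ∈ (ker K)^⊥; consequently (I + K)((ker K)^⊥) ⊆ (ker K)^⊥. -/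
/-! A vector fixed by the contraction `1 + K` is also fixed by its adjoint, so
`ker K ≤ ker K† = (range K)ᗮ`. Hence the whole range of `K` is orthogonal to `ker K`. -/

open scoped InnerProduct

section

variable {𝕜 E : Type*} [RCLike 𝕜] [NormedAddCommGroup E] [InnerProductSpace 𝕜 E] [CompleteSpace E]

theorem ContinuousLinearMap.adjoint_apply_eq_self_of_apply_eq_self {T : E →L[𝕜] E}
    (hT : ‖T‖ ≤ 1) {y : E} (hy : T y = y) : (T†) y = y := by
  refine eq_of_norm_le_re_inner_eq_norm_sq (𝕜 := 𝕜) ?_ ?_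
  · simpa using (T†).le_of_opNorm_le ((adjoint.norm_map T).trans_le hT) y
  · rw [adjoint_inner_left, hy, inner_self_eq_norm_sq]

theorem ContinuousLinearMap.ker_le_ker_adjoint_of_norm_one_add_le_one {K : E →L[𝕜] E}
    (h : ‖1 + K‖ ≤ 1) : K.ker ≤ (K†).ker := by
  intro y (hy : K y = 0)
  have hfix : ((1 + K)†) y = y := adjoint_apply_eq_self_of_apply_eq_self h (by simp [hy])
  simpa [adjoint_one] using hfix

theorem ContinuousLinearMap.range_le_orthogonal_ker_of_ker_le_ker_adjoint {K : E →L[𝕜] E}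
    (h : K.ker ≤ (K†).ker) : K.range ≤ K.kerᗮ :=
  Submodule.IsOrtho.symm <| by rwa [Submodule.isOrtho_iff_le, orthogonal_range]

end

open ContinuousLinearMap in
/-- If `‖I + K‖ ≤ 1`, then `K` maps `(ker K)ᗮ` into itself, and consequently so does
`I + K`. -/
theorem ker_orthogonal_invariant
    {H : Type*} [NormedAddCommGroup H] [InnerProductSpace ℂ H] [CompleteSpace H]
    (K : H →L[ℂ] H) (h : ‖(1 : H →L[ℂ] H) + K‖ ≤ 1) :
    (∀ x ∈ (LinearMap.ker (K : H →ₗ[ℂ] H))ᗮ, K x ∈ (LinearMap.ker (K : H →ₗ[ℂ] H))ᗮ) ∧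
      ∀ x ∈ (LinearMap.ker (K : H →ₗ[ℂ] H))ᗮ, ((1 : H →L[ℂ] H) + K) x ∈ (LinearMap.ker (K : H →ₗ[ℂ] H))ᗮ := by
  have hrange := range_le_orthogonal_ker_of_ker_le_ker_adjoint
    (ker_le_ker_adjoint_of_norm_one_add_le_one h)
  have hK : ∀ x, K x ∈ (LinearMap.ker (K : H →ₗ[ℂ] H))ᗮ := fun x ↦ hrange ⟨x, rfl⟩
  exact ⟨fun x _ ↦ hK x, fun x hx ↦ Submodule.add_mem _ hx (hK x)⟩
end

section
/- Let H and D be complex Hilbert spaces, U a unitary operator on H, B : D → H a linear isometry, Γ a contraction on D, and T := U + B(Γ − I)B*U. For z in the open unit disc 𝔻 define F₁(z) := zB*(I − zU*)⁻¹U*B. Then for every z ∈ 𝔻 the operators I_H − zT* and I_D − (Γ* − I)F₁(z) are invertible, and (I − zT*)⁻¹ = (I − zU*)⁻¹ + z(I − zU*)⁻¹U*B[I_D − (Γ* − I)F₁(z)]⁻¹(Γ* − I)B*(I − zU*)⁻¹. -/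
/-!
Since `T* = U* (1 + B (Γ* - 1) B*)` and `1 + B (Γ* - 1) B*` acts as the identity on `(ran B)ᗮ`
and as `B Γ* B*` on `ran B`, `T*` is a contraction, so `1 - z T*` is invertible. Writing
`1 - z T* = (1 - z U*) - (z U* B) ((Γ* - 1) B*)` exhibits it as a perturbation of the invertible
`1 - z U*` that factors through `D`; the Woodbury identity inverts it, with middle factor
`1 - ((Γ* - 1) B*) (1 - z U*)⁻¹ (z U* B) = 1 - (Γ* - 1) F₁(z)`, whose invertibility follows from
that of `1 - z T*` because `1 - A C` and `1 - C A` are invertible together.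
-/

open ContinuousLinearMap
open scoped InnerProductSpace

namespace ContinuousLinearMap

variable {R E F : Type*} [Ring R]
  [AddCommGroup E] [Module R E] [TopologicalSpace E] [IsTopologicalAddGroup E]
  [AddCommGroup F] [Module R F] [TopologicalSpace F]

theorem sub_comp_eq_mul_one_sub_comp {R₀ : E →L[R] E} (hR₀ : IsUnit R₀) (A : F →L[R] E)
    (C : E →L[R] F) : R₀ - A ∘L C = R₀ * (1 - (Ring.inverse R₀ ∘L A) ∘L C) := by
  rw [mul_sub, mul_one, mul_def, ← comp_assoc, ← comp_assoc, ← mul_def R₀,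
    Ring.mul_inverse_cancel _ hR₀, one_def, id_comp]

variable [IsTopologicalAddGroup F]

noncomputable def oneSubCompUnit (A : F →L[R] E) (C : E →L[R] F)
    (h : IsUnit ((1 : F →L[R] F) - C ∘L A)) : (E →L[R] E)ˣ where
  val := 1 - A ∘L C
  inv := 1 + A ∘L Ring.inverse (1 - C ∘L A) ∘L C
  val_inv := by
    calc (1 - A ∘L C) * (1 + A ∘L Ring.inverse (1 - C ∘L A) ∘L C)
        = 1 - A ∘L C + A ∘L ((1 - C ∘L A) * Ring.inverse (1 - C ∘L A)) ∘L C := by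
          simp only [mul_def, sub_comp, comp_add, comp_sub, one_def, id_comp, comp_id, comp_assoc]
      _ = 1 := by rw [Ring.mul_inverse_cancel _ h]; simp [one_def]
  inv_val := by
    calc (1 + A ∘L Ring.inverse (1 - C ∘L A) ∘L C) * (1 - A ∘L C)
        = 1 - A ∘L C + A ∘L (Ring.inverse (1 - C ∘L A) * (1 - C ∘L A)) ∘L C := by
          simp only [mul_def, sub_comp, comp_sub, add_comp, one_def, id_comp, comp_id, comp_assoc]
          abel
      _ = 1 := by rw [Ring.inverse_mul_cancel _ h]; simp [one_def]

theorem isUnit_one_sub_comp_comm {A : F →L[R] E} {C : E →L[R] F} :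
    IsUnit ((1 : E →L[R] E) - A ∘L C) ↔ IsUnit ((1 : F →L[R] F) - C ∘L A) :=
  ⟨fun h => (oneSubCompUnit C A h).isUnit, fun h => (oneSubCompUnit A C h).isUnit⟩

theorem inverse_one_sub_comp {A : F →L[R] E} {C : E →L[R] F}
    (h : IsUnit ((1 : F →L[R] F) - C ∘L A)) :
    Ring.inverse ((1 : E →L[R] E) - A ∘L C) = 1 + A ∘L Ring.inverse (1 - C ∘L A) ∘L C :=
  Ring.inverse_unit (oneSubCompUnit A C h)

theorem isUnit_sub_comp_iff {R₀ : E →L[R] E} (hR₀ : IsUnit R₀) {A : F →L[R] E}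
    {C : E →L[R] F} :
    IsUnit (R₀ - A ∘L C) ↔ IsUnit ((1 : F →L[R] F) - C ∘L Ring.inverse R₀ ∘L A) := by
  rw [sub_comp_eq_mul_one_sub_comp hR₀, hR₀.mul_left_iff, isUnit_one_sub_comp_comm]

theorem inverse_sub_comp {R₀ : E →L[R] E} (hR₀ : IsUnit R₀) {A : F →L[R] E} {C : E →L[R] F}
    (h : IsUnit ((1 : F →L[R] F) - C ∘L Ring.inverse R₀ ∘L A)) :
    Ring.inverse (R₀ - A ∘L C) = Ring.inverse R₀ + Ring.inverse R₀ ∘L A ∘L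
      Ring.inverse (1 - C ∘L Ring.inverse R₀ ∘L A) ∘L C ∘L Ring.inverse R₀ := by
  rw [sub_comp_eq_mul_one_sub_comp hR₀, Ring.inverse_mul (Or.inl hR₀),
    inverse_one_sub_comp h, add_mul, one_mul, mul_def]
  simp only [comp_assoc]

end ContinuousLinearMap

theorem isUnit_one_sub_smul_of_norm_le_one {𝕜 A : Type*} [NormedField 𝕜] [NormedRing A]
    [NormedAlgebra 𝕜 A] [CompleteSpace A] {a : A} (ha : ‖a‖ ≤ 1) {z : 𝕜} (hz : ‖z‖ < 1) :
    IsUnit (1 - z • a) :=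
  isUnit_one_sub_of_norm_lt_one <| by
    rw [norm_smul]
    exact (mul_le_of_le_one_right (norm_nonneg z) ha).trans_lt hz

section Isometry

variable {𝕜 H D : Type*} [RCLike 𝕜]
  [NormedAddCommGroup H] [InnerProductSpace 𝕜 H] [CompleteSpace H]
  [NormedAddCommGroup D] [InnerProductSpace 𝕜 D] [CompleteSpace D]

theorem norm_one_add_comp_sub_one_comp_adjoint_le {B : D →L[𝕜] H} (hB : ∀ x, ‖B x‖ = ‖x‖)
    {Γ : D →L[𝕜] D} (hΓ : ‖Γ‖ ≤ 1) : ‖1 + B ∘L (Γ - 1) ∘L adjoint B‖ ≤ 1 := by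
  refine opNorm_le_bound _ zero_le_one fun y => ?_
  have hBB : adjoint B ∘L B = 1 := (norm_map_iff_adjoint_comp_self B).mp hB
  set d := adjoint B y
  have hperp : ∀ w, ⟪y - B d, B w⟫_𝕜 = 0 := fun w => by
    rw [← adjoint_inner_left, map_sub, ← comp_apply, hBB, one_apply_eq_self, sub_self,
      inner_zero_left]
  have happly : (1 + B ∘L (Γ - 1) ∘L adjoint B) y = (y - B d) + B (Γ d) := by
    simp only [add_apply, one_apply_eq_self, comp_apply, sub_apply, map_sub]
    abel
  have hsq : ‖(y - B d) + B (Γ d)‖ ^ 2 ≤ ‖y‖ ^ 2 := by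
    have hΓd : ‖Γ d‖ ≤ ‖d‖ := by simpa using Γ.le_of_opNorm_le hΓ d
    have hy : ‖y‖ ^ 2 = ‖y - B d‖ ^ 2 + ‖B d‖ ^ 2 := by
      simpa [sq] using norm_add_sq_eq_norm_sq_add_norm_sq_of_inner_eq_zero _ _ (hperp d)
    rw [sq, norm_add_sq_eq_norm_sq_add_norm_sq_of_inner_eq_zero _ _ (hperp _), hy, hB, hB]
    nlinarith [norm_nonneg (Γ d)]
  rw [happly, one_mul]
  exact (sq_le_sq₀ (norm_nonneg _) (norm_nonneg _)).mp hsq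

end Isometry

/-- Equation (A.6): for the contraction `T = U + B (Γ - I) B* U` and `z` in the open unit
disc, with `F₁(z) = z B* (I - z U*)⁻¹ U* B`, the operators `I - z T*` and
`I - (Γ* - I) F₁(z)` are invertible and
`(I - zT*)⁻¹ = (I - zU*)⁻¹ + z (I - zU*)⁻¹ U* B [I - (Γ* - I)F₁(z)]⁻¹ (Γ* - I) B* (I - zU*)⁻¹`. -/
theorem resolvent_formula
    {H D : Type*} [NormedAddCommGroup H] [InnerProductSpace ℂ H] [CompleteSpace H]
    [NormedAddCommGroup D] [InnerProductSpace ℂ D] [CompleteSpace D]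
    (U : H →L[ℂ] H) (hU : U ∈ unitary (H →L[ℂ] H))
    (B : D →L[ℂ] H) (hB : ∀ x : D, ‖B x‖ = ‖x‖)
    (Γ : D →L[ℂ] D) (hΓ : ‖Γ‖ ≤ 1)
    (T : H →L[ℂ] H) (hT : T = U + B ∘L (Γ - 1) ∘L adjoint B ∘L U)
    (z : ℂ) (hz : ‖z‖ < 1)
    (F₁ : D →L[ℂ] D)
    (hF₁ : F₁ = z • (adjoint B ∘L Ring.inverse (1 - z • adjoint U) ∘L adjoint U ∘L B)) :
    IsUnit (1 - z • adjoint T) ∧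
    IsUnit ((1 : D →L[ℂ] D) - (adjoint Γ - 1) ∘L F₁) ∧
    Ring.inverse (1 - z • adjoint T) =
      Ring.inverse (1 - z • adjoint U) +
        z • (Ring.inverse (1 - z • adjoint U) ∘L adjoint U ∘L B ∘L
          Ring.inverse ((1 : D →L[ℂ] D) - (adjoint Γ - 1) ∘L F₁) ∘L (adjoint Γ - 1) ∘L
            adjoint B ∘L Ring.inverse (1 - z • adjoint U)) := by
  have hU_star : adjoint U ∈ unitary (H →L[ℂ] H) := star_eq_adjoint U ▸ Unitary.star_mem hU
  have hT_adj : adjoint T = adjoint U * (1 + B ∘L (adjoint Γ - 1) ∘L adjoint B) := by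
    simp [hT, adjoint_comp, mul_def, one_def, comp_assoc]
  have hT_unit : IsUnit (1 - z • adjoint T) := by
    refine isUnit_one_sub_smul_of_norm_le_one ?_ hz
    rw [hT_adj, CStarRing.norm_mem_unitary_mul _ hU_star]
    exact norm_one_add_comp_sub_one_comp_adjoint_le hB
      ((LinearIsometryEquiv.norm_map adjoint Γ).trans_le hΓ)
  have hR_unit : IsUnit (1 - z • adjoint U) := by
    refine isUnit_one_sub_smul_of_norm_le_one ?_ hz
    rw [← mul_one (adjoint U), CStarRing.norm_mem_unitary_mul _ hU_star]
    exact norm_id_le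
  have hsplit : 1 - z • adjoint T =
      (1 - z • adjoint U) - (z • (adjoint U ∘L B)) ∘L ((adjoint Γ - 1) ∘L adjoint B) := by
    rw [hT_adj, mul_add, mul_one, smul_add, sub_add_eq_sub_sub, smul_comp, mul_def]
    simp only [comp_assoc]
  have hF₁_eq : (adjoint Γ - 1) ∘L F₁ = ((adjoint Γ - 1) ∘L adjoint B) ∘L
      Ring.inverse (1 - z • adjoint U) ∘L (z • (adjoint U ∘L B)) := by
    rw [hF₁]
    simp only [comp_smul, comp_assoc]
  have hD_unit : IsUnit ((1 : D →L[ℂ] D) - (adjoint Γ - 1) ∘L F₁) := by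
    rw [hF₁_eq, ← isUnit_sub_comp_iff hR_unit, ← hsplit]
    exact hT_unit
  refine ⟨hT_unit, hD_unit, ?_⟩
  rw [hsplit, inverse_sub_comp hR_unit (hF₁_eq ▸ hD_unit), ← hF₁_eq]
  simp only [comp_smul, smul_comp, comp_assoc]
end

section
/- Let H and D be complex Hilbert spaces, U a unitary operator on H, B : D → H a linear isometry, Γ a self-adjoint strict contraction on D with Γ ≥ 0, and T := U + B(Γ − I)B*U (a contraction). Define β := (I − Γ)^{1/2}(I + Γ)^{−1/2}, F₂(z) := B*(I + zU*)(I − zU*)⁻¹B, and θ(z) := B*(−T + zD_{T*}(I − zT*)⁻¹D_T)U*B for z in the open unit disc 𝔻. Then for every z ∈ 𝔻 the operator I − θ(z) is invertible and (I − θ(z))⁻¹ = (βF₂(z)β + I)/2. -/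
/-! Write `c = (1 + Γ)^{1/2}` and `d = (1 - Γ)^{1/2}`; they commute and `c` is invertible.
Since `T = (1 - B d² B*) U`, both defect operators of `T` are conjugates of `d c` by isometries
(`B`, resp. `U* B`), which gives `θ(z) = -Γ + d c G d c` with `G = B* (1 - zT*)⁻¹ zU* B`, i.e.
`1 - θ(z) = c (1 - d G d) c`. On the other hand `1 - zT* = (1 - zU*) + (zU* B d)(d B*)`, so the
Woodbury identity inverts `1 - d G d` as `1 + d K d` with `K = B* (1 - zU*)⁻¹ zU* B`. Finally
`F₂(z) = 1 + 2K`, and `β = d c⁻¹` turns `(β F₂(z) β + 1)/2` into `c⁻¹ (1 + d K d) c⁻¹`. -/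

open ContinuousLinearMap

theorem commute_one_sub_one_add {R : Type*} [Ring R] (a : R) : Commute (1 - a) (1 + a) :=
  (Commute.one_left _).sub_left ((Commute.one_right a).add_right (.refl a))

section CStarAlgebra

variable {A : Type*} [CStarAlgebra A] [PartialOrder A] [StarOrderedRing A]

theorem CFC.commute_sqrt_sqrt {a b : A} (hab : Commute a b) : Commute (sqrt a) (sqrt b) := by
  rw [sqrt_eq_cfc, sqrt_eq_cfc]
  exact ((hab.cfc_nnreal _).symm.cfc_nnreal _).symm

theorem CFC.sqrt_mul_of_commute {a b : A} (ha : 0 ≤ a) (hb : 0 ≤ b) (hab : Commute a b) :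
    sqrt (a * b) = sqrt a * sqrt b := by
  have hcomm := commute_sqrt_sqrt hab
  refine sqrt_unique ?_ (hcomm.mul_nonneg (sqrt_nonneg a) (sqrt_nonneg b))
  rw [hcomm.symm.mul_mul_mul_comm, sqrt_mul_sqrt_self a ha, sqrt_mul_sqrt_self b hb]

theorem one_sub_mul_one_add_nonneg {a : A} (h₀ : 0 ≤ a) (h₁ : a ≤ 1) :
    0 ≤ (1 - a) * (1 + a) :=
  (commute_one_sub_one_add a).mul_nonneg (sub_nonneg.mpr h₁) (add_nonneg zero_le_one h₀)

theorem CFC.sqrt_one_sub_mul_one_add {a : A} (h₀ : 0 ≤ a) (h₁ : a ≤ 1) :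
    sqrt ((1 - a) * (1 + a)) = sqrt (1 - a) * sqrt (1 + a) :=
  sqrt_mul_of_commute (sub_nonneg.mpr h₁) (add_nonneg zero_le_one h₀) (commute_one_sub_one_add a)

theorem CStarAlgebra.norm_le_one_of_mul_star_le_one {a : A} (h : a * star a ≤ 1) : ‖a‖ ≤ 1 := by
  have h' := (norm_le_one_iff_of_nonneg _ (mul_star_self_nonneg a)).mpr h
  rw [CStarRing.norm_self_mul_star] at h'
  nlinarith [norm_nonneg a]

theorem CStarAlgebra.norm_le_one_of_mem_unitary {u : A} (hu : u ∈ unitary A) : ‖u‖ ≤ 1 :=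
  norm_le_one_of_mul_star_le_one (Unitary.mul_star_self_of_mem hu).le

end CStarAlgebra

section Woodbury

variable {R M₁ M₂ : Type*} [Ring R] [AddCommGroup M₁] [Module R M₁] [TopologicalSpace M₁]
  [IsTopologicalAddGroup M₁] [AddCommGroup M₂] [Module R M₂] [TopologicalSpace M₂]
  [IsTopologicalAddGroup M₂]

namespace ContinuousLinearMap

theorem one_sub_comp_mul_one_add_comp {q r s : M₂ →L[R] M₂} (a : M₁ →L[R] M₂)
    (b : M₂ →L[R] M₁) (hqr : q * r = 1) (hs : s * (q + a ∘L b) = 1) :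
    (1 - b ∘L s ∘L a) * (1 + b ∘L r ∘L a) = 1 := by
  have hinner : r - s - s * (a ∘L b) * r = 0 :=
    calc r - s - s * (a ∘L b) * r = r - s * (q + a ∘L b) * r := by
          rw [mul_add, add_mul, mul_assoc s q r, hqr, mul_one]; abel
      _ = 0 := by rw [hs, one_mul, sub_self]
  calc (1 - b ∘L s ∘L a) * (1 + b ∘L r ∘L a)
      = 1 + b ∘L (r - s - s * (a ∘L b) * r) ∘L a := by ext x; simp; abel
    _ = 1 := by rw [hinner, zero_comp, comp_zero, add_zero]

theorem one_add_comp_mul_one_sub_comp {q r s : M₂ →L[R] M₂} (a : M₁ →L[R] M₂)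
    (b : M₂ →L[R] M₁) (hrq : r * q = 1) (hs : (q + a ∘L b) * s = 1) :
    (1 + b ∘L r ∘L a) * (1 - b ∘L s ∘L a) = 1 := by
  have hinner : r - s - r * (a ∘L b) * s = 0 :=
    calc r - s - r * (a ∘L b) * s = r - r * (q + a ∘L b) * s := by
          rw [mul_add, add_mul, hrq, one_mul]; abel
      _ = 0 := by rw [mul_assoc, hs, mul_one, sub_self]
  calc (1 + b ∘L r ∘L a) * (1 - b ∘L s ∘L a)
      = 1 + b ∘L (r - s - r * (a ∘L b) * s) ∘L a := by ext x; simp; abel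
    _ = 1 := by rw [hinner, zero_comp, comp_zero, add_zero]

theorem inverse_one_sub_comp_inverse_add_comp {q : M₂ →L[R] M₂} (a : M₁ →L[R] M₂)
    (b : M₂ →L[R] M₁) (hq : IsUnit q) (hqab : IsUnit (q + a ∘L b)) :
    IsUnit (1 - b ∘L Ring.inverse (q + a ∘L b) ∘L a) ∧
      Ring.inverse (1 - b ∘L Ring.inverse (q + a ∘L b) ∘L a) =
        1 + b ∘L Ring.inverse q ∘L a := by
  let u : (M₁ →L[R] M₁)ˣ :=
    ⟨_, _, one_sub_comp_mul_one_add_comp a b (Ring.mul_inverse_cancel q hq)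
        (Ring.inverse_mul_cancel _ hqab),
      one_add_comp_mul_one_sub_comp a b (Ring.inverse_mul_cancel q hq)
        (Ring.mul_inverse_cancel _ hqab)⟩
  exact ⟨u.isUnit, Ring.inverse_unit u⟩

end ContinuousLinearMap

end Woodbury

section RingIdentities

variable {A : Type*} [Ring A]

theorem one_add_mul_inverse_one_sub {x : A} (hx : IsUnit (1 - x)) :
    (1 + x) * Ring.inverse (1 - x) = 1 + 2 * (Ring.inverse (1 - x) * x) :=
  calc (1 + x) * Ring.inverse (1 - x)
      = 2 * Ring.inverse (1 - x) - (1 - x) * Ring.inverse (1 - x) := by noncomm_ring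
    _ = 2 * (Ring.inverse (1 - x) * (1 - x)) + 2 * (Ring.inverse (1 - x) * x) - 1 := by
        rw [Ring.mul_inverse_cancel _ hx]; noncomm_ring
    _ = 1 + 2 * (Ring.inverse (1 - x) * x) := by
        rw [Ring.inverse_mul_cancel _ hx]; noncomm_ring

theorem one_sub_neg_add_mul_mul {g c d G : A} (hc : c * c = 1 + g) (hcd : Commute c d) :
    1 - (-g + d * c * G * (d * c)) = c * (1 - d * G * d) * c := by
  have h : d * c * G * (d * c) = c * (d * G * d) * c := by
    rw [← hcd.eq]; simp only [mul_assoc]; rw [hcd.eq]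
  rw [h, mul_sub, sub_mul, mul_one, hc]; abel

theorem half_smul_mul_one_add_two_mul_mul_add_one [Algebra ℂ A] {g c d k : A} (hc : IsUnit c)
    (hc2 : c * c = 1 + g) (hd : d * d = 1 - g) (hcd : Commute c d) :
    (1 / 2 : ℂ) • (d * Ring.inverse c * (1 + 2 * k) * (d * Ring.inverse c) + 1) =
      Ring.inverse c * (1 + d * k * d) * Ring.inverse c := by
  obtain ⟨u, rfl⟩ := hc
  have hud : Commute (↑u⁻¹ : A) d := hcd.units_inv_left
  have hone : (1 : A) = ↑u⁻¹ * (1 + g) * ↑u⁻¹ := by rw [← hc2]; simp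
  have key : d * ↑u⁻¹ * (1 + 2 * k) * (d * ↑u⁻¹) + 1 = 2 * (↑u⁻¹ * (1 + d * k * d) * ↑u⁻¹) :=
    calc d * ↑u⁻¹ * (1 + 2 * k) * (d * ↑u⁻¹) + 1
        = ↑u⁻¹ * d * (1 + 2 * k) * (d * ↑u⁻¹) + ↑u⁻¹ * (1 + g) * ↑u⁻¹ := by
          nth_rw 1 [← hud.eq]; rw [← hone]
      _ = ↑u⁻¹ * (d * d + 2 * (d * k * d)) * ↑u⁻¹ + ↑u⁻¹ * (1 + g) * ↑u⁻¹ := by noncomm_ring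
      _ = 2 * (↑u⁻¹ * (1 + d * k * d) * ↑u⁻¹) := by rw [hd]; noncomm_ring
  rw [Ring.inverse_unit, key, two_mul, smul_add, ← add_smul]
  norm_num

end RingIdentities

section HilbertSpace

variable {H D : Type*} [NormedAddCommGroup H] [InnerProductSpace ℂ H] [CompleteSpace H]
  [NormedAddCommGroup D] [InnerProductSpace ℂ D] [CompleteSpace D]

theorem CFC.sqrt_comp_comp_adjoint {V : D →L[ℂ] H} (hV : adjoint V ∘L V = 1)
    {a : D →L[ℂ] D} (ha : 0 ≤ a) :
    sqrt (V ∘L a ∘L adjoint V) = V ∘L sqrt a ∘L adjoint V := by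
  refine sqrt_unique ?_ ?_
  · simp only [mul_def, comp_assoc]
    rw [← comp_assoc (adjoint V), hV, one_def, id_comp, ← comp_assoc (sqrt a), ← mul_def,
      sqrt_mul_sqrt_self a ha]
  · rw [nonneg_iff_isPositive]
    exact ((nonneg_iff_isPositive _).mp (sqrt_nonneg a)).conj_adjoint V

theorem ContinuousLinearMap.isUnit_one_sub_smul_adjoint {T : H →L[ℂ] H} (hT : ‖T‖ ≤ 1)
    {z : ℂ} (hz : ‖z‖ < 1) : IsUnit (1 - z • adjoint T) := by
  refine (Units.oneSub _ ?_).isUnit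
  rw [norm_smul, LinearIsometryEquiv.norm_map]
  exact mul_lt_one_of_nonneg_of_lt_one_left (norm_nonneg z) hz hT

theorem ContinuousLinearMap.le_one_of_norm_apply_le {a : D →L[ℂ] D} (ha : 0 ≤ a)
    (h : ∀ x : D, ‖a x‖ ≤ ‖x‖) : a ≤ 1 :=
  (CStarAlgebra.norm_le_one_iff_of_nonneg a ha).mp
    (opNorm_le_bound _ zero_le_one fun x => (one_mul ‖x‖).symm ▸ h x)

variable {U T : H →L[ℂ] H} {B : D →L[ℂ] H} {Γ : D →L[ℂ] D}

theorem one_sub_mul_adjoint_eq (hU : U ∈ unitary (H →L[ℂ] H)) (hB : adjoint B ∘L B = 1)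
    (hΓ : IsSelfAdjoint Γ) (hT : T = U + B ∘L (Γ - 1) ∘L adjoint B ∘L U) :
    1 - T * adjoint T = B ∘L ((1 - Γ) * (1 + Γ)) ∘L adjoint B := by
  have hUU : ∀ x, U (adjoint U x) = x := fun x => by
    simpa [← star_eq_adjoint] using congr($(Unitary.mul_star_self_of_mem hU) x)
  have hBB : ∀ x, adjoint B (B x) = x := fun x => congr($hB x)
  have hΓ' : adjoint Γ = Γ := hΓ
  subst hT
  ext x; simp [hUU, hBB, adjoint_comp, hΓ', adjoint_one]; abel

theorem one_sub_adjoint_mul_eq (hU : U ∈ unitary (H →L[ℂ] H)) (hB : adjoint B ∘L B = 1)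
    (hΓ : IsSelfAdjoint Γ) (hT : T = U + B ∘L (Γ - 1) ∘L adjoint B ∘L U) :
    1 - adjoint T * T =
      (adjoint U ∘L B) ∘L ((1 - Γ) * (1 + Γ)) ∘L adjoint (adjoint U ∘L B) := by
  have hUU : ∀ x, adjoint U (U x) = x := fun x => by
    simpa [← star_eq_adjoint] using congr($(Unitary.star_mul_self_of_mem hU) x)
  have hBB : ∀ x, adjoint B (B x) = x := fun x => congr($hB x)
  have hΓ' : adjoint Γ = Γ := hΓ
  subst hT
  ext x; simp [hUU, hBB, adjoint_comp, hΓ', adjoint_one]; abel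

theorem one_sub_smul_adjoint_eq (hΓ : IsSelfAdjoint Γ)
    (hT : T = U + B ∘L (Γ - 1) ∘L adjoint B ∘L U) {d : D →L[ℂ] D} (hd : d * d = 1 - Γ) (z : ℂ) :
    1 - z • adjoint T =
      (1 - z • adjoint U) + (z • (adjoint U ∘L B ∘L d)) ∘L (d ∘L adjoint B) := by
  have hdd : ∀ x, d (d x) = x - Γ x := fun x => congr($hd x)
  have hΓ' : adjoint Γ = Γ := hΓ
  subst hT
  ext x; simp [hdd, adjoint_comp, hΓ', adjoint_one]; module

theorem adjoint_comp_characteristic_comp_eq (hU : U ∈ unitary (H →L[ℂ] H))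
    (hB : adjoint B ∘L B = 1) (hT : T = U + B ∘L (Γ - 1) ∘L adjoint B ∘L U)
    (N : D →L[ℂ] D) (S : H →L[ℂ] H) (z : ℂ) :
    adjoint B ∘L (-T + z • ((B ∘L N ∘L adjoint B) ∘L S ∘L
        ((adjoint U ∘L B) ∘L N ∘L adjoint (adjoint U ∘L B)))) ∘L adjoint U ∘L B =
      -Γ + N * (adjoint B ∘L S ∘L (z • adjoint U) ∘L B) * N := by
  have hUU : ∀ x, U (adjoint U x) = x := fun x => by
    simpa [← star_eq_adjoint] using congr($(Unitary.mul_star_self_of_mem hU) x)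
  have hBB : ∀ x, adjoint B (B x) = x := fun x => congr($hB x)
  subst hT
  ext x; simp [hUU, hBB, adjoint_comp]; abel

theorem sqrt_one_sub_mul_star_eq (hU : U ∈ unitary (H →L[ℂ] H)) (hB : adjoint B ∘L B = 1)
    (hΓ₀ : 0 ≤ Γ) (hΓ₁ : Γ ≤ 1) (hT : T = U + B ∘L (Γ - 1) ∘L adjoint B ∘L U) :
    CFC.sqrt (1 - T * star T) = B ∘L (CFC.sqrt (1 - Γ) * CFC.sqrt (1 + Γ)) ∘L adjoint B := by
  rw [star_eq_adjoint, one_sub_mul_adjoint_eq hU hB (.of_nonneg hΓ₀) hT,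
    CFC.sqrt_comp_comp_adjoint hB (one_sub_mul_one_add_nonneg hΓ₀ hΓ₁),
    CFC.sqrt_one_sub_mul_one_add hΓ₀ hΓ₁]

theorem sqrt_one_sub_star_mul_eq (hU : U ∈ unitary (H →L[ℂ] H)) (hB : adjoint B ∘L B = 1)
    (hΓ₀ : 0 ≤ Γ) (hΓ₁ : Γ ≤ 1) (hT : T = U + B ∘L (Γ - 1) ∘L adjoint B ∘L U) :
    CFC.sqrt (1 - star T * T) = (adjoint U ∘L B) ∘L (CFC.sqrt (1 - Γ) * CFC.sqrt (1 + Γ)) ∘L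
      adjoint (adjoint U ∘L B) := by
  have hUB : adjoint (adjoint U ∘L B) ∘L (adjoint U ∘L B) = 1 := by
    rw [adjoint_comp, adjoint_adjoint, comp_assoc, ← comp_assoc U, ← mul_def,
      ← star_eq_adjoint, Unitary.mul_star_self_of_mem hU, one_def, id_comp, hB]
  rw [star_eq_adjoint, one_sub_adjoint_mul_eq hU hB (.of_nonneg hΓ₀) hT,
    CFC.sqrt_comp_comp_adjoint hUB (one_sub_mul_one_add_nonneg hΓ₀ hΓ₁),
    CFC.sqrt_one_sub_mul_one_add hΓ₀ hΓ₁]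

theorem norm_le_one_of_eq_add_comp (hU : U ∈ unitary (H →L[ℂ] H)) (hB : adjoint B ∘L B = 1)
    (hΓ₀ : 0 ≤ Γ) (hΓ₁ : Γ ≤ 1) (hT : T = U + B ∘L (Γ - 1) ∘L adjoint B ∘L U) : ‖T‖ ≤ 1 := by
  refine CStarAlgebra.norm_le_one_of_mul_star_le_one (sub_nonneg.mp ?_)
  rw [star_eq_adjoint, one_sub_mul_adjoint_eq hU hB (.of_nonneg hΓ₀) hT,
    nonneg_iff_isPositive]
  exact ((nonneg_iff_isPositive _).mp (one_sub_mul_one_add_nonneg hΓ₀ hΓ₁)).conj_adjoint B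

theorem inverse_one_sub_compressed_resolvent (hU : U ∈ unitary (H →L[ℂ] H))
    (hB : adjoint B ∘L B = 1) (hΓ₀ : 0 ≤ Γ) (hΓ₁ : Γ ≤ 1)
    (hT : T = U + B ∘L (Γ - 1) ∘L adjoint B ∘L U) {d : D →L[ℂ] D} (hd : d * d = 1 - Γ)
    {z : ℂ} (hz : ‖z‖ < 1) :
    IsUnit (1 - d * (adjoint B ∘L Ring.inverse (1 - z • adjoint T) ∘L (z • adjoint U) ∘L B) * d) ∧
      Ring.inverse
          (1 - d * (adjoint B ∘L Ring.inverse (1 - z • adjoint T) ∘L (z • adjoint U) ∘L B) * d) =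
        1 + d * (adjoint B ∘L Ring.inverse (1 - z • adjoint U) ∘L (z • adjoint U) ∘L B) * d := by
  have hcomp : ∀ S : H →L[ℂ] H, d * (adjoint B ∘L S ∘L (z • adjoint U) ∘L B) * d =
      (d ∘L adjoint B) ∘L S ∘L (z • (adjoint U ∘L B ∘L d)) := fun S => by ext; simp
  have hsplit := one_sub_smul_adjoint_eq (.of_nonneg hΓ₀) hT hd z
  have hTz := isUnit_one_sub_smul_adjoint (norm_le_one_of_eq_add_comp hU hB hΓ₀ hΓ₁ hT) hz
  rw [hsplit] at hTz ⊢
  simp only [hcomp]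
  exact inverse_one_sub_comp_inverse_add_comp _ _ (isUnit_one_sub_smul_adjoint (CStarAlgebra.norm_le_one_of_mem_unitary hU) hz) hTz

theorem adjoint_comp_cayley_comp_eq (hB : adjoint B ∘L B = 1) {z : ℂ}
    (hUz : IsUnit (1 - z • adjoint U)) :
    adjoint B ∘L ((1 + z • adjoint U) * Ring.inverse (1 - z • adjoint U)) ∘L B =
      1 + 2 * (adjoint B ∘L Ring.inverse (1 - z • adjoint U) ∘L (z • adjoint U) ∘L B) := by
  have hBB : ∀ x, adjoint B (B x) = x := fun x => congr($hB x)
  rw [one_add_mul_inverse_one_sub hUz]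
  ext x; simp [hBB]

end HilbertSpace

theorem one_sub_characteristic_function_inverse_general
    {H D : Type*} [NormedAddCommGroup H] [InnerProductSpace ℂ H] [CompleteSpace H]
    [NormedAddCommGroup D] [InnerProductSpace ℂ D] [CompleteSpace D]
    (U : H →L[ℂ] H) (hU : U ∈ unitary (H →L[ℂ] H))
    (B : D →L[ℂ] H) (hB : ∀ x : D, ‖B x‖ = ‖x‖)
    (Γ : D →L[ℂ] D) (hΓpos : (0 : D →L[ℂ] D) ≤ Γ)
    (hΓ : ∀ x : D, x ≠ 0 → ‖Γ x‖ < ‖x‖)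
    (T : H →L[ℂ] H) (hT : T = U + B ∘L (Γ - 1) ∘L adjoint B ∘L U)
    (β : D →L[ℂ] D) (hβ : β = CFC.sqrt (1 - Γ) * Ring.inverse (CFC.sqrt (1 + Γ)))
    (z : ℂ) (hz : ‖z‖ < 1)
    (F₂ : D →L[ℂ] D)
    (hF₂ : F₂ = adjoint B ∘L ((1 + z • adjoint U) * Ring.inverse (1 - z • adjoint U)) ∘L B)
    (θ : D →L[ℂ] D)
    (hθ : θ = adjoint B ∘L
        (-T + z • (CFC.sqrt (1 - T * star T) ∘L Ring.inverse (1 - z • adjoint T) ∘L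
          CFC.sqrt (1 - star T * T))) ∘L adjoint U ∘L B) :
    IsUnit (1 - θ) ∧
      Ring.inverse (1 - θ) = ((1 : ℂ) / 2) • (β * F₂ * β + 1) := by
  have hBB := (norm_map_iff_adjoint_comp_self B).mp hB
  have hΓ₁ := le_one_of_norm_apply_le hΓpos fun x =>
    (eq_or_ne x 0).elim (fun hx => by simp [hx]) fun hx => (hΓ x hx).le
  set c := CFC.sqrt (1 + Γ)
  set d := CFC.sqrt (1 - Γ)
  have hc : c * c = 1 + Γ := CFC.sqrt_mul_sqrt_self _ (add_nonneg zero_le_one hΓpos)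
  have hd : d * d = 1 - Γ := CFC.sqrt_mul_sqrt_self _ (sub_nonneg.mpr hΓ₁)
  have hcd : Commute c d := CFC.commute_sqrt_sqrt (commute_one_sub_one_add Γ).symm
  have hcu : IsUnit c := (CFC.isUnit_sqrt_iff _ (add_nonneg zero_le_one hΓpos)).mpr
    (CStarAlgebra.isUnit_of_le 1 (le_add_of_nonneg_right hΓpos) isStrictlyPositive_one)
  have hθc : 1 - θ = c * (1 - d * (adjoint B ∘L Ring.inverse (1 - z • adjoint T) ∘L
      (z • adjoint U) ∘L B) * d) * c := by
    rw [hθ, sqrt_one_sub_mul_star_eq hU hBB hΓpos hΓ₁ hT,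
      sqrt_one_sub_star_mul_eq hU hBB hΓpos hΓ₁ hT,
      adjoint_comp_characteristic_comp_eq hU hBB hT]
    exact one_sub_neg_add_mul_mul hc hcd
  obtain ⟨hunit, hinv⟩ := inverse_one_sub_compressed_resolvent hU hBB hΓpos hΓ₁ hT hd hz
  refine ⟨hθc ▸ (hcu.mul hunit).mul hcu, ?_⟩
  have hUz := isUnit_one_sub_smul_adjoint (CStarAlgebra.norm_le_one_of_mem_unitary hU) hz
  rw [hθc, Ring.inverse_mul (.inr hcu), Ring.inverse_mul (.inl hcu), hinv, hβ, hF₂,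
    adjoint_comp_cayley_comp_eq hBB hUz, half_smul_mul_one_add_two_mul_mul_add_one hcu hc hd hcd,
    ← mul_assoc]

/-- Equation (4.1): for the contraction `T = U + B (Γ - I) B* U` with `U` unitary, `B` an
isometry and `Γ = Γ* ≥ 0` a strict contraction, with `β = (I - Γ)^{1/2} (I + Γ)^{-1/2}`,
`F₂(z) = B* (I + zU*)(I - zU*)⁻¹ B`, and the characteristic function
`θ(z) = B* (-T + z D_{T*} (I - z T*)⁻¹ D_T) U* B`, the operator `I - θ(z)` is invertible
and `(I - θ(z))⁻¹ = (β F₂(z) β + I)/2` for `z` in the open unit disc. -/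
theorem one_sub_characteristic_function_inverse
    {H D : Type*} [NormedAddCommGroup H] [InnerProductSpace ℂ H] [CompleteSpace H]
    [NormedAddCommGroup D] [InnerProductSpace ℂ D] [CompleteSpace D]
    (U : H →L[ℂ] H) (hU : U ∈ unitary (H →L[ℂ] H))
    (B : D →L[ℂ] H) (hB : ∀ x : D, ‖B x‖ = ‖x‖)
    (Γ : D →L[ℂ] D) (hΓsa : IsSelfAdjoint Γ) (hΓpos : (0 : D →L[ℂ] D) ≤ Γ)
    (hΓ : ∀ x : D, x ≠ 0 → ‖Γ x‖ < ‖x‖)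
    (T : H →L[ℂ] H) (hT : T = U + B ∘L (Γ - 1) ∘L adjoint B ∘L U)
    (β : D →L[ℂ] D) (hβ : β = CFC.sqrt (1 - Γ) * Ring.inverse (CFC.sqrt (1 + Γ)))
    (z : ℂ) (hz : ‖z‖ < 1)
    (F₂ : D →L[ℂ] D)
    (hF₂ : F₂ = adjoint B ∘L ((1 + z • adjoint U) * Ring.inverse (1 - z • adjoint U)) ∘L B)
    (θ : D →L[ℂ] D)
    (hθ : θ = adjoint B ∘L
        (-T + z • (CFC.sqrt (1 - T * star T) ∘L Ring.inverse (1 - z • adjoint T) ∘L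
          CFC.sqrt (1 - star T * T))) ∘L adjoint U ∘L B) :
    IsUnit (1 - θ) ∧
      Ring.inverse (1 - θ) = ((1 : ℂ) / 2) • (β * F₂ * β + 1) :=
  one_sub_characteristic_function_inverse_general U hU B hB Γ hΓpos hΓ T hT β hβ z hz F₂ hF₂ θ hθ
end
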